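/- Let G be a group and c a left-invariant circular ordering of G. Then c is a secret left-ordering (i.e., c = c_< for some left-ordering < of G) if and only if rot_c(g) = 0 in ℝ/ℤ and τ_c(g,h) = 0 for all g, h ∈ G. -/

import Mathlib

/-!
Write `ε g = [g ≠ 1]` and `δD (g, h) = D g + D h - D (g h)`. Case analysis gives
`2 f_c = δε - c(1, g, g h)`, so `f_c` is a 2-cocycle, `G̃_c` is associative, and the floors
`[(g, 0)ⁿ]_c ∈ [0, n]` are quasi-additive in `n`; hence `r̃ot_c (g, m) = m + L g` with
`L g ∈ [0, 1]`. Vanishing of `rot_c` and `τ_c` says exactly that `L` takes values in `{0, 1}`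
and `f_c = δL`.

For a positive cone `P` with sign function `s` (`0` at `1`, `1` on `P`, `-1` elsewhere),
`c_P (x, y, z) = s (x⁻¹ y) + s (y⁻¹ z) - s (x⁻¹ z)`. So if `s = ε - 2D`, then `c = c_P` iff
`c (1, g, g h) = δs (g, h)` iff `f_c = δD`. Both directions follow: from `P` take
`D = [g < 1]`; from `D` take `P = {g ≠ 1 | D g = 0}`, a positive cone because `f_c ≥ 0`.
-/

namespace Paper

variable {G : Type*} [Group G]

/-- A left-invariant circular ordering of a group `G`, as a function `G³ → {0, ±1} ⊆ ℤ`. -/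
def IsCircOrd (c : G → G → G → ℤ) : Prop :=
  (∀ g₁ g₂ g₃ : G, c g₁ g₂ g₃ = 0 ↔ (g₁ = g₂ ∨ g₁ = g₃ ∨ g₂ = g₃)) ∧
  (∀ g₁ g₂ g₃ : G, c g₁ g₂ g₃ = 0 ∨ c g₁ g₂ g₃ = 1 ∨ c g₁ g₂ g₃ = -1) ∧
  (∀ g₁ g₂ g₃ g₄ : G, c g₂ g₃ g₄ - c g₁ g₃ g₄ + c g₁ g₂ g₄ - c g₁ g₂ g₃ = 0) ∧
  (∀ g g₁ g₂ g₃ : G, c (g*g₁) (g*g₂) (g*g₃) = c g₁ g₂ g₃)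

/-- The space CO(G) of circular orderings, topologized as a subspace of `ℤ^{G³}`
(all relevant values lie in the discrete set `{0,±1}`, and `ℤ` carries the discrete
topology, so this is the subspace topology from the product topology on `{0,±1}^{G³}`). -/
abbrev CircOrd (G : Type*) [Group G] := {c : G → G → G → ℤ // IsCircOrd c}

open Classical in
/-- The cocycle `f_c`: `f_c(g,h) = 0` if `g = 1` or `h = 1` or `c(1,g,gh) = 1`,
and `f_c(g,h) = 1` otherwise (i.e. when `gh = 1 ≠ g`, or `c(1,gh,g) = 1`). -/
noncomputable def fc (c : G → G → G → ℤ) (g h : G) : ℤ :=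
  if g = 1 ∨ h = 1 ∨ c 1 g (g*h) = 1 then 0 else 1

/-- Multiplication in the central extension `G̃_c = G × ℤ`:
`(g,n)(h,m) = (gh, n+m+f_c(g,h))`. -/
noncomputable def liftMul (c : G → G → G → ℤ) (x y : G × ℤ) : G × ℤ :=
  (x.1 * y.1, x.2 + y.2 + fc c x.1 y.1)

/-- Powers (with natural number exponents) in `G̃_c`. -/
noncomputable def liftPow (c : G → G → G → ℤ) (x : G × ℤ) : ℕ → G × ℤ
  | 0 => (1, 0)
  | n+1 => liftMul c (liftPow c x n) x

/-- `[h]_c`: the unique integer `k` with `z_c^k ≤_c h <_c z_c^{k+1}`, where `<_c` is the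
left-ordering of `G̃_c` with positive cone `{(g,n) : n ≥ 0} ∖ {(1,0)}` and `z_c = (1,1)`.
Since `z_c^k = (1,k)` and `f_c(g,g⁻¹) = 1` for `g ≠ 1`, this is exactly the second
coordinate of `h`. -/
def liftFloor (h : G × ℤ) : ℤ := h.2

/-- The translation number `r̃ot_c(h)` of `h ∈ G̃_c`: the limit of `[hⁿ]_c / n`
(`limUnder` picks out the limit when it exists). -/
noncomputable def rotTilde (c : G → G → G → ℤ) (h : G × ℤ) : ℝ :=
  Filter.limUnder Filter.atTop (fun n : ℕ => (liftFloor (liftPow c h n) : ℝ) / (n : ℝ))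

/-- The rotation number `rot_c(g) ∈ ℝ/ℤ`, computed using the lift `(g,0) ∈ G̃_c`
(it is independent of the choice of lift). -/
noncomputable def rotc (c : G → G → G → ℤ) (g : G) : AddCircle (1:ℝ) :=
  ((rotTilde c (g, 0) : ℝ) : AddCircle (1:ℝ))

/-- `τ_c(g,h) = r̃ot_c(g̃h̃) − r̃ot_c(g̃) − r̃ot_c(h̃)`, computed using the lifts `(g,0)`
and `(h,0)` (it is independent of the choice of lifts). -/
noncomputable def tauc (c : G → G → G → ℤ) (g h : G) : ℝ :=
  rotTilde c (liftMul c (g,0) (h,0)) - rotTilde c (g,0) - rotTilde c (h,0)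

/-- A positive cone of a group `G`: `P · P ⊆ P` and `P ∪ P⁻¹ = G ∖ {1}`.
It determines a left-ordering by `g < h` iff `g⁻¹h ∈ P`. -/
def IsPositiveCone (P : Set G) : Prop :=
  (∀ a ∈ P, ∀ b ∈ P, a * b ∈ P) ∧ (P ∪ P⁻¹ = {g : G | g ≠ 1})

/-- The left-ordering determined by a positive cone. -/
def coneLt (P : Set G) (a b : G) : Prop := a⁻¹ * b ∈ P

open Classical in
/-- The secret left-ordering `c_<` determined by a positive cone `P`:
`c_<(a,b,c) = sign σ` where `σ` is the permutation sorting `(a,b,c)` into increasing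
order, i.e. `c_< = 1` on positively cyclically ordered triples, `-1` on negatively
cyclically ordered triples, and `0` when the entries are not all distinct. -/
noncomputable def circOfCone (P : Set G) : G → G → G → ℤ := fun a b c =>
  if (coneLt P a b ∧ coneLt P b c) ∨ (coneLt P b c ∧ coneLt P c a) ∨
      (coneLt P c a ∧ coneLt P a b) then 1
  else if (coneLt P c b ∧ coneLt P b a) ∨ (coneLt P b a ∧ coneLt P a c) ∨
      (coneLt P a c ∧ coneLt P c b) then -1
  else 0

/-- A circular ordering is a *secret left-ordering* if it is `c_<` for some
left-ordering `<` of `G`. -/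
def IsSecret (c : G → G → G → ℤ) : Prop := ∃ P : Set G, IsPositiveCone P ∧ c = circOfCone P

open Filter Topology

open Classical in
noncomputable def neOne (g : G) : ℤ := if g = 1 then 0 else 1

def coboundary (D : G → ℤ) (g h : G) : ℤ := D g + D h - D (g * h)

section Cocycle

variable {c : G → G → G → ℤ}

lemma fc_one_left (c : G → G → G → ℤ) (h : G) : fc c 1 h = 0 := by
  simp [fc]

lemma fc_one_right (c : G → G → G → ℤ) (g : G) : fc c g 1 = 0 := by
  simp [fc]

lemma fc_eq_zero_or_eq_one (c : G → G → G → ℤ) (g h : G) : fc c g h = 0 ∨ fc c g h = 1 := by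
  unfold fc; split_ifs <;> simp

lemma two_mul_fc (hc : IsCircOrd c) (g h : G) :
    2 * fc c g h = coboundary neOne g h - c 1 g (g * h) := by
  have hdeg := hc.1 1 g (g * h)
  rcases hc.2.1 1 g (g * h) with hv | hv | hv <;>
    by_cases hg : g = 1 <;> by_cases hh : h = 1 <;> by_cases hgh : g * h = 1 <;>
    simp_all [fc, coboundary, neOne, eq_comm (a := (1 : G))]

lemma fc_cocycle (hc : IsCircOrd c) (g h k : G) :
    fc c g h + fc c (g * h) k = fc c g (h * k) + fc c h k := by
  have hcoc := hc.2.2.1 1 g (g * h) (g * h * k)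
  have hinv := hc.2.2.2 g 1 h (h * k)
  have := two_mul_fc hc g h
  have := two_mul_fc hc (g * h) k
  have := two_mul_fc hc g (h * k)
  have := two_mul_fc hc h k
  simp only [coboundary, mul_one, ← mul_assoc] at *
  linarith

lemma fc_mul_inv (hc : IsCircOrd c) {g : G} (hg : g ≠ 1) : fc c g g⁻¹ = 1 := by
  have := two_mul_fc hc g g⁻¹
  simp [coboundary, neOne, hg, (hc.1 1 g 1).2 (Or.inr (Or.inl rfl))] at this
  omega

end Cocycle

section Lift

variable {c : G → G → G → ℤ}

lemma liftMul_assoc (hc : IsCircOrd c) (x y z : G × ℤ) :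
    liftMul c (liftMul c x y) z = liftMul c x (liftMul c y z) := by
  have := fc_cocycle hc x.1 y.1 z.1
  simp only [liftMul, mul_assoc, Prod.mk.injEq, true_and]
  linarith

lemma liftPow_fst (c : G → G → G → ℤ) (x : G × ℤ) (n : ℕ) : (liftPow c x n).1 = x.1 ^ n := by
  induction n with
  | zero => simp [liftPow]
  | succ n ih => simp [liftPow, liftMul, ih, pow_succ]

lemma liftPow_add (hc : IsCircOrd c) (x : G × ℤ) (n m : ℕ) :
    liftPow c x (n + m) = liftMul c (liftPow c x n) (liftPow c x m) := by
  induction m with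
  | zero => simp [liftPow, liftMul, fc_one_right]
  | succ m ih => rw [← add_assoc, liftPow, ih, liftMul_assoc hc, liftPow]

noncomputable def powFloor (c : G → G → G → ℤ) (g : G) (n : ℕ) : ℤ :=
  liftFloor (liftPow c (g, 0) n)

lemma powFloor_succ (c : G → G → G → ℤ) (g : G) (n : ℕ) :
    powFloor c g (n + 1) = powFloor c g n + fc c (g ^ n) g := by
  simp [powFloor, liftFloor, liftPow, liftMul, liftPow_fst]

lemma powFloor_add (hc : IsCircOrd c) (g : G) (n m : ℕ) :
    powFloor c g (n + m) = powFloor c g n + powFloor c g m + fc c (g ^ n) (g ^ m) := by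
  simp [powFloor, liftFloor, liftPow_add hc, liftMul, liftPow_fst]

lemma powFloor_nonneg (c : G → G → G → ℤ) (g : G) (n : ℕ) : 0 ≤ powFloor c g n := by
  induction n with
  | zero => rfl
  | succ n ih => rcases fc_eq_zero_or_eq_one c (g ^ n) g with h | h <;> rw [powFloor_succ] <;> omega

lemma powFloor_le (c : G → G → G → ℤ) (g : G) (n : ℕ) : powFloor c g n ≤ n := by
  induction n with
  | zero => rfl
  | succ n ih => rcases fc_eq_zero_or_eq_one c (g ^ n) g with h | h <;> rw [powFloor_succ] <;> omega

lemma liftFloor_liftPow (c : G → G → G → ℤ) (g : G) (m : ℤ) (n : ℕ) :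
    liftFloor (liftPow c (g, m) n) = n * m + powFloor c g n := by
  induction n with
  | zero => simp [liftFloor, liftPow, powFloor]
  | succ n ih =>
    simp only [liftFloor, powFloor] at ih ⊢
    simp only [liftPow, liftMul, liftPow_fst, ih]
    push_cast
    ring

lemma rotTilde_eq_of_tendsto {g : G} {L : ℝ}
    (hL : Tendsto (fun n : ℕ => (powFloor c g n : ℝ) / n) atTop (𝓝 L)) (m : ℤ) :
    rotTilde c (g, m) = m + L := by
  refine Tendsto.limUnder_eq ((tendsto_const_nhds.add hL).congr' ?_)
  filter_upwards [eventually_ne_atTop 0] with n hn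
  rw [liftFloor_liftPow]
  field_simp
  push_cast
  ring

-- `powFloor` is quasi-additive, so `powFloor + 1` is subadditive (Fekete).
lemma exists_tendsto_powFloor (hc : IsCircOrd c) (g : G) :
    ∃ L ∈ Set.Icc (0 : ℝ) 1, Tendsto (fun n : ℕ => (powFloor c g n : ℝ) / n) atTop (𝓝 L) := by
  have hsub : Subadditive fun n => (powFloor c g n : ℝ) + 1 := by
    intro n m
    have := powFloor_add hc g n m
    have := fc_eq_zero_or_eq_one c (g ^ n) (g ^ m)
    dsimp only
    exact_mod_cast (by omega : powFloor c g (n + m) + 1 ≤ powFloor c g n + 1 + (powFloor c g m + 1))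
  have hbdd : BddBelow (Set.range fun n : ℕ => ((powFloor c g n : ℝ) + 1) / n) :=
    ⟨0, by rintro _ ⟨n, rfl⟩; have := powFloor_nonneg c g n; positivity⟩
  have hL : Tendsto (fun n : ℕ => (powFloor c g n : ℝ) / n) atTop (𝓝 hsub.lim) := by
    simpa [add_div] using (hsub.tendsto_lim hbdd).sub tendsto_one_div_atTop_nhds_zero_nat
  refine ⟨hsub.lim, ⟨ge_of_tendsto' hL fun n => ?_, le_of_tendsto' hL fun n => ?_⟩, hL⟩
  · have := powFloor_nonneg c g n
    positivity
  · rcases n.eq_zero_or_pos with rfl | hn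
    · simp
    · rw [div_le_one (by positivity)]
      exact_mod_cast powFloor_le c g n

end Lift

section Coboundary

variable {c : G → G → G → ℤ} {D : G → ℤ}

lemma apply_one_of_fc_eq_coboundary (hf : ∀ g h, fc c g h = coboundary D g h) : D 1 = 0 := by
  simpa [coboundary, fc_one_left, eq_comm] using hf 1 1

lemma powFloor_of_fc_eq_coboundary (hf : ∀ g h, fc c g h = coboundary D g h) (g : G) (n : ℕ) :
    powFloor c g n = n * D g - D (g ^ n) := by
  induction n with
  | zero => simp [powFloor, liftFloor, liftPow, apply_one_of_fc_eq_coboundary hf]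
  | succ n ih =>
    rw [powFloor_succ, ih, hf, coboundary, ← pow_succ]
    push_cast
    ring

lemma rotTilde_of_fc_eq_coboundary (hD01 : ∀ g, D g = 0 ∨ D g = 1)
    (hf : ∀ g h, fc c g h = coboundary D g h) (g : G) (m : ℤ) :
    rotTilde c (g, m) = m + D g := by
  refine rotTilde_eq_of_tendsto ?_ m
  have hbdd : Tendsto (fun n : ℕ => (D (g ^ n) : ℝ) / n) atTop (𝓝 0) := by
    refine squeeze_zero (fun n => ?_) (fun n => ?_)
      tendsto_one_div_atTop_nhds_zero_nat
    · rcases hD01 (g ^ n) with h | h <;> simp [h]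
    · rcases hD01 (g ^ n) with h | h <;> simp [h]
  have hlim : Tendsto (fun n : ℕ => (D g : ℝ) - (D (g ^ n) : ℝ) / n) atTop (𝓝 (D g)) := by
    simpa using tendsto_const_nhds.sub hbdd
  refine hlim.congr' ?_
  filter_upwards [eventually_ne_atTop 0] with n hn
  rw [powFloor_of_fc_eq_coboundary hf]
  field_simp
  push_cast
  ring

lemma liftMul_zero_zero (c : G → G → G → ℤ) (g h : G) :
    liftMul c (g, 0) (h, 0) = (g * h, fc c g h) := by
  simp [liftMul]

lemma rotc_eq_zero_and_tauc_eq_zero (hD01 : ∀ g, D g = 0 ∨ D g = 1)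
    (hf : ∀ g h, fc c g h = coboundary D g h) (g h : G) :
    rotc c g = 0 ∧ tauc c g h = 0 := by
  simp only [rotc, tauc, liftMul_zero_zero, rotTilde_of_fc_eq_coboundary hD01 hf, hf,
    coboundary, AddCircle.coe_eq_zero_iff]
  refine ⟨⟨D g, by simp⟩, by push_cast; ring⟩

lemma exists_fc_eq_coboundary (hc : IsCircOrd c) (H : ∀ g h, rotc c g = 0 ∧ tauc c g h = 0) :
    ∃ D : G → ℤ, (∀ g, D g = 0 ∨ D g = 1) ∧ ∀ g h, fc c g h = coboundary D g h := by
  choose L hL hLim using exists_tendsto_powFloor hc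
  have hrot (g : G) (m : ℤ) : rotTilde c (g, m) = m + L g := rotTilde_eq_of_tendsto (hLim g) m
  have hint (g : G) : ∃ d : ℤ, (d = 0 ∨ d = 1) ∧ (d : ℝ) = L g := by
    obtain ⟨d, hd⟩ := (AddCircle.coe_eq_zero_iff _).1 (H g g).1
    simp only [hrot, Int.cast_zero, zero_add, zsmul_eq_mul, mul_one] at hd
    have h0 : 0 ≤ d := by exact_mod_cast hd ▸ (hL g).1
    have h1 : d ≤ 1 := by exact_mod_cast hd ▸ (hL g).2
    exact ⟨d, by omega, hd⟩
  choose D hD01 hDL using hint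
  refine ⟨D, hD01, fun g h => ?_⟩
  have := (H g h).2
  simp only [tauc, liftMul_zero_zero, hrot, ← hDL, Int.cast_zero, zero_add] at this
  exact_mod_cast (by linarith : (fc c g h : ℝ) = D g + D h - D (g * h))

end Coboundary

open Classical in
noncomputable def relSign {α : Type*} (r : α → α → Prop) (a b : α) : ℤ :=
  if a = b then 0 else if r a b then 1 else -1

open Classical in
theorem cyclic_ite_eq_relSign {α : Type*} (r : α → α → Prop) [IsStrictTotalOrder α r]
    (a b c : α) :
    (if (r a b ∧ r b c) ∨ (r b c ∧ r c a) ∨ (r c a ∧ r a b) then (1 : ℤ)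
      else if (r c b ∧ r b a) ∨ (r b a ∧ r a c) ∨ (r a c ∧ r c b) then -1 else 0) =
    relSign r a b + relSign r b c - relSign r a c := by
  have htrans : ∀ x y z, r x y → r y z → r x z := fun _ _ _ => _root_.trans
  have hirrefl : ∀ x, ¬ r x x := irrefl
  have := trichotomous (r := r) a b
  have := trichotomous (r := r) b c
  have := trichotomous (r := r) a c
  unfold relSign
  split_ifs <;> grind

section Cone

variable {P : Set G}

open Classical in
noncomputable def coneSign (P : Set G) (g : G) : ℤ := if g = 1 then 0 else if g ∈ P then 1 else -1

lemma IsPositiveCone.one_notMem (hP : IsPositiveCone P) : (1 : G) ∉ P := fun h1 =>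
  (hP.2.subset (Or.inl h1) : (1 : G) ≠ 1) rfl

lemma IsPositiveCone.isStrictTotalOrder (hP : IsPositiveCone P) :
    IsStrictTotalOrder G (coneLt P) where
  irrefl a := by simpa [coneLt] using hP.one_notMem
  trans a b c hab hbc := by simpa [coneLt, mul_assoc] using hP.1 _ hab _ hbc
  trichotomous a b hab hba := by
    by_contra h
    have : a⁻¹ * b ∈ P ∪ P⁻¹ := hP.2.symm.subset (by simpa [inv_mul_eq_one] using h)
    simp_all [coneLt]

lemma coneSign_inv_mul (P : Set G) (x y : G) :
    coneSign P (x⁻¹ * y) = relSign (coneLt P) x y := by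
  unfold coneSign relSign coneLt
  split_ifs <;> simp_all [inv_mul_eq_one]

lemma circOfCone_eq (hP : IsPositiveCone P) (x y z : G) :
    circOfCone P x y z = coneSign P (x⁻¹ * y) + coneSign P (y⁻¹ * z) - coneSign P (x⁻¹ * z) := by
  have := hP.isStrictTotalOrder
  simp only [coneSign_inv_mul]
  exact cyclic_ite_eq_relSign (coneLt P) x y z

variable {c : G → G → G → ℤ} {D : G → ℤ}

lemma eq_circOfCone_iff (hc : IsCircOrd c) (hP : IsPositiveCone P)
    (hD : ∀ g, coneSign P g = neOne g - 2 * D g) :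
    c = circOfCone P ↔ ∀ g h, fc c g h = coboundary D g h := by
  have key (g h : G) : fc c g h = coboundary D g h ↔ c 1 g (g * h) = circOfCone P 1 g (g * h) := by
    have := two_mul_fc hc g h
    simp only [circOfCone_eq hP, inv_one, one_mul, inv_mul_cancel_left, hD, coboundary] at *
    omega
  refine ⟨fun hcP g h => (key g h).2 (by rw [hcP]), fun hf => ?_⟩
  funext x y z
  have hinv := hc.2.2.2 x⁻¹ x y z
  rw [inv_mul_cancel, show x⁻¹ * z = x⁻¹ * y * (y⁻¹ * z) by group] at hinv
  rw [← hinv, (key _ _).1 (hf _ _), circOfCone_eq hP, circOfCone_eq hP]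
  simp [mul_assoc]

open Classical in
noncomputable def negIndicator (P : Set G) (g : G) : ℤ := if g = 1 ∨ g ∈ P then 0 else 1

lemma negIndicator_eq_zero_or_eq_one (P : Set G) (g : G) :
    negIndicator P g = 0 ∨ negIndicator P g = 1 := by
  unfold negIndicator; split_ifs <;> simp

lemma coneSign_eq_neOne_sub_negIndicator (P : Set G) (g : G) :
    coneSign P g = neOne g - 2 * negIndicator P g := by
  unfold coneSign neOne negIndicator; split_ifs <;> simp_all

lemma coneSign_setOf_of_fc_eq_coboundary (hD01 : ∀ g, D g = 0 ∨ D g = 1)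
    (hf : ∀ g h, fc c g h = coboundary D g h) (g : G) :
    coneSign {g : G | g ≠ 1 ∧ D g = 0} g = neOne g - 2 * D g := by
  have := apply_one_of_fc_eq_coboundary hf
  rcases hD01 g with h | h <;> by_cases hg : g = 1 <;> simp_all [coneSign, neOne]

lemma isPositiveCone_of_fc_eq_coboundary (hc : IsCircOrd c) (hD01 : ∀ g, D g = 0 ∨ D g = 1)
    (hf : ∀ g h, fc c g h = coboundary D g h) : IsPositiveCone {g : G | g ≠ 1 ∧ D g = 0} := by
  have hD1 := apply_one_of_fc_eq_coboundary hf
  have hDinv {g : G} (hg : g ≠ 1) : D g + D g⁻¹ = 1 := by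
    simpa [coboundary, fc_mul_inv hc hg, hD1, eq_comm] using hf g g⁻¹
  refine ⟨fun a ⟨ha1, ha⟩ b ⟨hb1, hb⟩ => ?_, ?_⟩
  · have hab : a * b ≠ 1 := fun hab => by
      obtain rfl := eq_inv_of_mul_eq_one_right hab
      have := hDinv ha1
      omega
    have := hf a b
    have := fc_eq_zero_or_eq_one c a b
    have := hD01 (a * b)
    exact ⟨hab, by simp only [coboundary] at *; omega⟩
  · ext g
    simp only [Set.mem_union, Set.mem_ofPred_eq, Set.mem_inv, ne_eq, inv_eq_one]
    refine ⟨by rintro (⟨hg, -⟩ | ⟨hg, -⟩) <;> exact hg, fun hg => ?_⟩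
    rcases hD01 g with h | h
    · exact Or.inl ⟨hg, h⟩
    · exact Or.inr ⟨hg, by linarith [hDinv hg]⟩

end Cone

/-- Corollary 4.11: a circular ordering `c` of `G` is a secret left-ordering if and only
if `rot_c(g) = 0` in `ℝ/ℤ` and `τ_c(g,h) = 0` for all `g, h ∈ G`. -/
theorem stmt10 (c : G → G → G → ℤ) (hc : IsCircOrd c) :
    IsSecret c ↔ (∀ g h : G, rotc c g = 0 ∧ tauc c g h = 0) := by
  constructor
  · rintro ⟨P, hP, hcP⟩
    have hf := (eq_circOfCone_iff hc hP (coneSign_eq_neOne_sub_negIndicator P)).1 hcP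
    exact rotc_eq_zero_and_tauc_eq_zero (negIndicator_eq_zero_or_eq_one P) hf
  · intro H
    obtain ⟨D, hD01, hf⟩ := exists_fc_eq_coboundary hc H
    have hP := isPositiveCone_of_fc_eq_coboundary hc hD01 hf
    exact ⟨_, hP, (eq_circOfCone_iff hc hP (coneSign_setOf_of_fc_eq_coboundary hD01 hf)).2 hf⟩

end Paper
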